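/- Let m and n be coprime positive integers and let r be a positive integer. Let F' be the set of pairs (ε, η) of injective functions from {1, …, r} to ℂ such that ε(1)⋯ε(r) = 1, η(1)⋯η(r) = 1, and ε(i)^n = η(j)^m for all i, j. Then F' is finite and n · m · |F'| = r · (n)_r · (m)_r, where (x)_r denotes the falling factorial x(x−1)⋯(x−r+1) (equal to 0 when r > x). -/

import Mathlib

/-!
Let `T` (`rootDetPairs ℂ m n r`) be the set of pairs `(ε, η)` of injective `r`-tuples with
`ε(i)^n = η(j)^m` for all `i, j` whose products are an `n`-th and an `m`-th root of unity, and
count `T` in two ways.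

Sorting by the common value `ϖ = ε(i)^n`, which satisfies `ϖ^r = (∏ ε)^n = 1`, each of the `r`
fibres consists of an injective tuple of `n`-th roots of `ϖ` and one of `m`-th roots of `ϖ`, so
`|T| = r · (n)_r · (m)_r`.

Sorting instead by the products `(u, v) ∈ μ_n × μ_m`, each fibre is in bijection with
`F'` (`unimodularEigenPairs ℂ m n r`) through `(ε, η) ↦ (α ε, β η)`, where `α^r = u`, `β^r = v`
and `α^n = β^m`. Such `α, β` exist: as `m, n` are coprime there is `c` with `c^m = u` and
`c^n = v`, and `α = γ^m`, `β = γ^n` for an `r`-th root `γ` of `c`. Hence `|T| = n · m · |F'|`.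
-/

open Function Set

theorem Set.Finite.card_eq_card_mul_of_mapsTo {α β : Type*} {s : Set α} {t : Set β}
    {f : α → β} (hs : s.Finite) (ht : t.Finite) (hf : MapsTo f s t) {k : ℕ}
    (hk : ∀ b ∈ t, Nat.card ↥(s ∩ f ⁻¹' {b}) = k) : Nat.card s = Nat.card t * k := by
  classical
  lift s to Finset α using hs
  lift t to Finset β using ht
  simp only [Nat.card_coe_set_eq, ncard_coe_finset] at hk ⊢
  rw [Finset.card_eq_sum_card_fiberwise hf, Finset.sum_const_nat]
  intro b hb
  rw [← hk b hb, ← ncard_coe_finset, Finset.coe_filter]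
  rfl

section InjectiveMaps

variable {ι α : Type*} {s : Set α}

def Equiv.setOfInjectiveForallMem (s : Set α) :
    {f : ι → α | Injective f ∧ ∀ i, f i ∈ s} ≃ (ι ↪ s) where
  toFun f := ⟨fun i => ⟨f.1 i, f.2.2 i⟩, fun _ _ h => f.2.1 (congrArg Subtype.val h)⟩
  invFun g := ⟨fun i => g i, Subtype.val_injective.comp g.injective, fun i => (g i).2⟩
  left_inv _ := rfl
  right_inv _ := rfl

theorem Set.Finite.finite_setOf_injective_forall_mem [Finite ι] (hs : s.Finite) :
    {f : ι → α | Injective f ∧ ∀ i, f i ∈ s}.Finite :=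
  have := hs.fintype
  finite_coe_iff.1 (Finite.of_equiv _ (Equiv.setOfInjectiveForallMem s).symm)

theorem Set.Finite.card_setOf_injective_forall_mem [Fintype ι] (hs : s.Finite) :
    Nat.card {f : ι → α | Injective f ∧ ∀ i, f i ∈ s} =
      (Nat.card s).descFactorial (Fintype.card ι) := by
  have := hs.fintype
  rw [Nat.card_congr (Equiv.setOfInjectiveForallMem s), Nat.card_eq_fintype_card,
    Fintype.card_embedding_eq, Nat.card_eq_fintype_card]

end InjectiveMaps

theorem injective_smul_iff₀ {G M ι : Type*} [GroupWithZero G] [MulAction G M] {a : G}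
    (ha : a ≠ 0) {f : ι → M} : Injective (a • f) ↔ Injective f :=
  (MulAction.injective₀ ha).of_comp_iff f

theorem Complex.card_setOf_pow_eq {k : ℕ} (hk : k ≠ 0) {a : ℂ} (ha : a ≠ 0) :
    Nat.card {x : ℂ | x ^ k = a} = k := by
  classical
  have hζ := Complex.isPrimitiveRoot_exp k hk
  have hroots : {x : ℂ | x ^ k = a} = ↑(Polynomial.nthRootsFinset k a) := by
    ext x
    simp [Polynomial.mem_nthRootsFinset (Nat.pos_of_ne_zero hk)]
  rw [hroots, Nat.card_coe_set_eq, ncard_coe_finset, Polynomial.nthRootsFinset_def,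
    Multiset.toFinset_card_of_nodup (hζ.nthRoots_nodup ha), hζ.card_nthRoots,
    if_pos (IsAlgClosed.exists_pow_nat_eq a (Nat.pos_of_ne_zero hk))]

theorem Complex.finite_setOf_pow_eq {k : ℕ} (hk : k ≠ 0) {a : ℂ} (ha : a ≠ 0) :
    {x : ℂ | x ^ k = a}.Finite :=
  Nat.finite_of_card_ne_zero <| by rwa [Complex.card_setOf_pow_eq hk ha]

theorem zpow_pow_eq_self_of_pow_eq_one {G : Type*} [Group G] {k l : ℕ} {a b : ℤ}
    (hab : (k : ℤ) * a + l * b = 1) {u : G} (hu : u ^ l = 1) : (u ^ a) ^ k = u := by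
  have := congrArg (u ^ ·) hab
  simp only [zpow_add, zpow_mul, zpow_natCast, hu, one_zpow, mul_one, zpow_one] at this
  rwa [← zpow_natCast, ← zpow_mul, mul_comm, zpow_mul, zpow_natCast]

theorem zpow_pow_eq_one_of_pow_eq_one {G : Type*} [Group G] {k : ℕ} {u : G} (hu : u ^ k = 1)
    (a : ℤ) : (u ^ a) ^ k = 1 := by
  rw [← zpow_natCast, ← zpow_mul, mul_comm, zpow_mul, zpow_natCast, hu, one_zpow]

theorem exists_pow_eq_and_pow_eq_of_coprime {G : Type*} [CommGroup G] {m n : ℕ}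
    (hmn : m.Coprime n) {u v : G} (hu : u ^ n = 1) (hv : v ^ m = 1) :
    ∃ c : G, c ^ m = u ∧ c ^ n = v := by
  have bezout : (m : ℤ) * m.gcdA n + n * m.gcdB n = 1 := by
    rw [← Nat.gcd_eq_gcd_ab, hmn, Nat.cast_one]
  refine ⟨u ^ m.gcdA n * v ^ m.gcdB n, ?_, ?_⟩
  · rw [mul_pow, zpow_pow_eq_self_of_pow_eq_one bezout hu, zpow_pow_eq_one_of_pow_eq_one hv,
      mul_one]
  · rw [add_comm] at bezout
    rw [mul_pow, zpow_pow_eq_self_of_pow_eq_one bezout hv, zpow_pow_eq_one_of_pow_eq_one hu,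
      one_mul]

theorem IsAlgClosed.exists_pow_eq_and_pow_eq_pow {K : Type*} [Field K] [IsAlgClosed K]
    {m n r : ℕ} (hmn : m.Coprime n) (hm : m ≠ 0) (hn : n ≠ 0) (hr : r ≠ 0) {u v : K}
    (hu : u ^ n = 1) (hv : v ^ m = 1) :
    ∃ α β : K, α ^ r = u ∧ β ^ r = v ∧ α ^ n = β ^ m := by
  obtain ⟨U, rfl⟩ := IsUnit.of_pow_eq_one hu hn
  obtain ⟨V, rfl⟩ := IsUnit.of_pow_eq_one hv hm
  obtain ⟨c, hcm, hcn⟩ := exists_pow_eq_and_pow_eq_of_coprime (u := U) (v := V) hmn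
    (Units.ext (by rw [Units.val_pow_eq_pow_val, hu, Units.val_one]))
    (Units.ext (by rw [Units.val_pow_eq_pow_val, hv, Units.val_one]))
  obtain ⟨γ, hγ⟩ := IsAlgClosed.exists_pow_nat_eq (c : K) (Nat.pos_of_ne_zero hr)
  refine ⟨γ ^ m, γ ^ n, ?_, ?_, by rw [← pow_mul, ← pow_mul, mul_comm]⟩
  · rw [← pow_mul, mul_comm, pow_mul, hγ, ← Units.val_pow_eq_pow_val, hcm]
  · rw [← pow_mul, mul_comm, pow_mul, hγ, ← Units.val_pow_eq_pow_val, hcn]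

section CommMonoid

variable (K : Type*) [CommMonoid K] (m n r : ℕ)

def eigenPairs : Set ((Fin r → K) × (Fin r → K)) :=
  {p | Injective p.1 ∧ Injective p.2 ∧ ∀ i j, p.1 i ^ n = p.2 j ^ m}

variable {K r} in
def prodPair (p : (Fin r → K) × (Fin r → K)) : K × K := (∏ i, p.1 i, ∏ i, p.2 i)

def rootDetPairs : Set ((Fin r → K) × (Fin r → K)) :=
  eigenPairs K m n r ∩ prodPair ⁻¹' ({x | x ^ n = 1} ×ˢ {y | y ^ m = 1})

def unimodularEigenPairs : Set ((Fin r → K) × (Fin r → K)) :=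
  {p | Injective p.1 ∧ Injective p.2 ∧ (∏ i, p.1 i) = 1 ∧ (∏ i, p.2 i) = 1 ∧
    ∀ i j, p.1 i ^ n = p.2 j ^ m}

variable {K m n r}

theorem unimodularEigenPairs_eq_inter :
    unimodularEigenPairs K m n r = eigenPairs K m n r ∩ prodPair ⁻¹' {1} := by
  ext p
  simp only [unimodularEigenPairs, eigenPairs, prodPair, mem_inter_iff, mem_preimage,
    mem_singleton_iff, mem_ofPred_eq, Prod.ext_iff, Prod.fst_one, Prod.snd_one]
  tauto

theorem inter_prodPair_preimage_one_subset_rootDetPairs :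
    eigenPairs K m n r ∩ prodPair ⁻¹' {1} ⊆ rootDetPairs K m n r :=
  inter_subset_inter_right _ (preimage_mono (singleton_subset_iff.2 ⟨one_pow n, one_pow m⟩))

theorem prodPair_map_smul (α β : K) (p : (Fin r → K) × (Fin r → K)) :
    prodPair (Prod.map (α • ·) (β • ·) p) = (α ^ r * (prodPair p).1, β ^ r * (prodPair p).2) := by
  simp [prodPair, Finset.prod_mul_distrib]

variable [NeZero r]

theorem mapsTo_rootDetPairs :
    MapsTo (fun p => p.1 0 ^ n) (rootDetPairs K m n r) {w | w ^ r = 1} := by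
  rintro ⟨f, g⟩ ⟨⟨-, -, hfg⟩, hdet, -⟩
  calc (f 0 ^ n) ^ r = ∏ i : Fin r, f i ^ n := by
        simp [fun i => (hfg i 0).trans (hfg 0 0).symm]
    _ = 1 := by rw [Finset.prod_pow]; exact hdet

theorem rootDetPairs_inter_preimage {w : K} (hw : w ^ r = 1) :
    rootDetPairs K m n r ∩ (fun p => p.1 0 ^ n) ⁻¹' {w} =
      {f | Injective f ∧ ∀ i, f i ∈ {x | x ^ n = w}} ×ˢ
        {g | Injective g ∧ ∀ j, g j ∈ {y | y ^ m = w}} := by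
  ext ⟨f, g⟩
  simp only [rootDetPairs, eigenPairs, prodPair, mem_inter_iff, mem_preimage, mem_prod,
    mem_ofPred_eq, mem_singleton_iff, ← Finset.prod_pow]
  constructor
  · rintro ⟨⟨⟨hf, hg, hfg⟩, -⟩, rfl⟩
    exact ⟨⟨hf, fun i => (hfg i 0).trans (hfg 0 0).symm⟩, hg, fun j => (hfg 0 j).symm⟩
  · rintro ⟨⟨hf, hfw⟩, hg, hgw⟩
    simp [hf, hg, hfw, hgw, hw]

end CommMonoid

section Field

variable {K : Type*} [Field K] {m n r : ℕ}

theorem map_smul_mem_eigenPairs_iff {α β : K} (hα : α ≠ 0) (hβ : β ≠ 0) (hαβ : α ^ n = β ^ m)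
    {p : (Fin r → K) × (Fin r → K)} :
    Prod.map (α • ·) (β • ·) p ∈ eigenPairs K m n r ↔ p ∈ eigenPairs K m n r := by
  simp only [eigenPairs, mem_ofPred_eq, Prod.map_fst, Prod.map_snd, Pi.smul_apply, smul_eq_mul,
    mul_pow, hαβ, mul_right_inj' (pow_ne_zero m hβ), injective_smul_iff₀ hα, injective_smul_iff₀ hβ]

theorem card_eigenPairs_inter_prodPair_preimage [IsAlgClosed K] (hmn : m.Coprime n)
    (hm : m ≠ 0) (hn : n ≠ 0) (hr : r ≠ 0) {u v : K} (hu : u ^ n = 1) (hv : v ^ m = 1) :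
    Nat.card ↥(eigenPairs K m n r ∩ prodPair ⁻¹' {(u, v)}) =
      Nat.card ↥(eigenPairs K m n r ∩ prodPair ⁻¹' {1}) := by
  obtain ⟨α, β, hαr, hβr, hαβ⟩ := IsAlgClosed.exists_pow_eq_and_pow_eq_pow hmn hm hn hr hu hv
  have hα : α ≠ 0 := ne_zero_pow hr (hαr ▸ (IsUnit.of_pow_eq_one hu hn).ne_zero)
  have hβ : β ≠ 0 := ne_zero_pow hr (hβr ▸ (IsUnit.of_pow_eq_one hv hm).ne_zero)
  have hscale : Bijective (Prod.map (α • ·) (β • ·) : (Fin r → K) × (Fin r → K) → _) :=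
    (MulAction.bijective₀ hα).prodMap (MulAction.bijective₀ hβ)
  have hpre : Prod.map (α • ·) (β • ·) ⁻¹' (eigenPairs K m n r ∩ prodPair ⁻¹' {(u, v)}) =
      eigenPairs K m n r ∩ prodPair ⁻¹' {1} := by
    ext p
    simp only [mem_inter_iff, mem_preimage, map_smul_mem_eigenPairs_iff hα hβ hαβ,
      prodPair_map_smul, mem_singleton_iff, Prod.ext_iff, Prod.fst_one, Prod.snd_one, ← hαr,
      ← hβr, mul_eq_left₀ (pow_ne_zero r hα), mul_eq_left₀ (pow_ne_zero r hβ)]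
  rw [← hpre, Nat.card_preimage_of_injective hscale.injective
    (by simp [hscale.surjective.range_eq])]

end Field

section Complex

variable {m n r : ℕ} [NeZero r]

theorem finite_rootDetPairs (hm : m ≠ 0) (hn : n ≠ 0) : (rootDetPairs ℂ m n r).Finite := by
  refine Finite.of_finite_fibers (fun p => p.1 0 ^ n) ((Complex.finite_setOf_pow_eq
    (NeZero.ne r) one_ne_zero).subset mapsTo_rootDetPairs.image_subset) ?_
  rintro - ⟨p, hp, rfl⟩
  have hw := mapsTo_rootDetPairs hp
  have hw0 := (IsUnit.of_pow_eq_one hw (NeZero.ne r)).ne_zero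
  rw [rootDetPairs_inter_preimage hw]
  exact (Complex.finite_setOf_pow_eq hn hw0).finite_setOf_injective_forall_mem.prod
    (Complex.finite_setOf_pow_eq hm hw0).finite_setOf_injective_forall_mem

theorem card_rootDetPairs_eq_mul_descFactorial (hm : m ≠ 0) (hn : n ≠ 0) :
    Nat.card (rootDetPairs ℂ m n r) = r * (n.descFactorial r * m.descFactorial r) := by
  rw [(finite_rootDetPairs hm hn).card_eq_card_mul_of_mapsTo
    (Complex.finite_setOf_pow_eq (NeZero.ne r) one_ne_zero) mapsTo_rootDetPairs,
    Complex.card_setOf_pow_eq (NeZero.ne r) one_ne_zero]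
  intro w hw
  have hw0 := (IsUnit.of_pow_eq_one hw (NeZero.ne r)).ne_zero
  rw [rootDetPairs_inter_preimage hw, Nat.card_coe_set_eq, ncard_prod, ← Nat.card_coe_set_eq,
    ← Nat.card_coe_set_eq,
    (Complex.finite_setOf_pow_eq hn hw0).card_setOf_injective_forall_mem,
    (Complex.finite_setOf_pow_eq hm hw0).card_setOf_injective_forall_mem,
    Complex.card_setOf_pow_eq hn hw0, Complex.card_setOf_pow_eq hm hw0, Fintype.card_fin]

theorem card_rootDetPairs_eq_mul_card (hmn : m.Coprime n) (hm : m ≠ 0) (hn : n ≠ 0) :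
    Nat.card (rootDetPairs ℂ m n r) =
      n * m * Nat.card ↥(eigenPairs ℂ m n r ∩ prodPair ⁻¹' {1}) := by
  rw [(finite_rootDetPairs hm hn).card_eq_card_mul_of_mapsTo
    ((Complex.finite_setOf_pow_eq hn one_ne_zero).prod (Complex.finite_setOf_pow_eq hm one_ne_zero))
    (fun p hp => hp.2), Nat.card_coe_set_eq, ncard_prod, ← Nat.card_coe_set_eq,
    ← Nat.card_coe_set_eq, Complex.card_setOf_pow_eq hn one_ne_zero,
    Complex.card_setOf_pow_eq hm one_ne_zero]
  rintro ⟨u, v⟩ ⟨hu, hv⟩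
  rw [rootDetPairs, inter_assoc, ← preimage_inter,
    inter_eq_right.2 (singleton_subset_iff.2 (mk_mem_prod hu hv))]
  exact card_eigenPairs_inter_prodPair_preimage hmn hm hn (NeZero.ne r) hu hv

theorem finite_unimodularEigenPairs (hm : m ≠ 0) (hn : n ≠ 0) :
    (unimodularEigenPairs ℂ m n r).Finite := by
  rw [unimodularEigenPairs_eq_inter]
  exact (finite_rootDetPairs hm hn).subset inter_prodPair_preimage_one_subset_rootDetPairs

theorem card_unimodularEigenPairs (hmn : m.Coprime n) (hm : m ≠ 0) (hn : n ≠ 0) :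
    n * m * Nat.card (unimodularEigenPairs ℂ m n r) =
      r * n.descFactorial r * m.descFactorial r := by
  rw [unimodularEigenPairs_eq_inter, ← card_rootDetPairs_eq_mul_card hmn hm hn,
    card_rootDetPairs_eq_mul_descFactorial hm hn, mul_assoc]

end Complex

/-- Let `m` and `n` be coprime positive integers and `r` a positive integer. Let `F'` be the
set of pairs `(ε, η)` of injective functions `Fin r → ℂ` with `∏ ε i = ∏ η j = 1` and
`ε(i)^n = η(j)^m` for all `i, j`. Then `F'` is finite and
`n · m · |F'| = r · (n)_r · (m)_r` where `(x)_r` is the falling factorial. -/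
theorem stmt_4 (m n r : ℕ) (hm : 0 < m) (hn : 0 < n) (hr : 0 < r) (hmn : Nat.Coprime m n) :
    letI F' : Set ((Fin r → ℂ) × (Fin r → ℂ)) :=
      {p | Function.Injective p.1 ∧ Function.Injective p.2 ∧
        (∏ i, p.1 i) = 1 ∧ (∏ i, p.2 i) = 1 ∧
        ∀ i j, p.1 i ^ n = p.2 j ^ m}
    F'.Finite ∧ n * m * Nat.card F' = r * n.descFactorial r * m.descFactorial r := by
  have : NeZero r := ⟨hr.ne'⟩
  exact ⟨finite_unimodularEigenPairs hm.ne' hn.ne', card_unimodularEigenPairs hmn hm.ne' hn.ne'⟩
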